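/- Let H_n be the degree-based Hoover index of a random spider tree at time n: H_n = (Σ_{i ∈ V_n} |(n+3) deg_i - 2(n+2)|) / (4(n+2)(n+3)). Then H_n = (n+1) L_n / (2(n+3)(n+2)), E[H_n] = (p n^2 + 3n + 3 - p) / (2(n+3)(n+2)), Var(H_n) = p(1-p)(n^2-1)(n+1) / (4(n+3)^2(n+2)^2), and for every r > 0, H_n → p/2 in L^r as n → ∞. -/

import Mathlib

open Filter MeasureTheory Asymptotics Topology

/-- Expectation of `f` under a Binomial(m, p) distribution, as a finite sum. -/
noncomputable def binExp (m : ℕ) (p : ℝ) (f : ℕ → ℝ) : ℝ :=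
  ∑ k ∈ Finset.range (m+1), (m.choose k : ℝ) * p^k * (1-p)^(m-k) * f k

/-- Variance of `f` under a Binomial(m, p) distribution. -/
noncomputable def binVar (m : ℕ) (p : ℝ) (f : ℕ → ℝ) : ℝ :=
  binExp m p (fun k => (f k - binExp m p f)^2)

/-- The degree-based Hoover index of a random spider tree at time n, as a function of the
number of recruiting steps k made by the centroid (so that L_n = k + 3). -/
noncomputable def hooverF : ℕ → ℕ → ℝ :=
  (fun (n : ℕ) (k : ℕ) => ((n : ℝ)+1)*((k : ℝ)+3) / (2*((n : ℝ)+3)*((n : ℝ)+2)))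

/-! Only the centroid has degree above the mean degree `2(n+2)/(n+3)`, so the sum of absolute
deviations collapses to `2(n+1)L_n` and `H_n` is an affine function of `L_n - 3 ~ Bin(n-1, p)`.
Its mean and variance then come from the moment identities of the Bernstein polynomials
`C(m,k) X^k (1-X)^(m-k)`, which are exactly the binomial weights. As `Var H_n → 0` and
`E H_n → p/2`, `H_n → p/2` in `L²`; since `|H_n - p/2| ≤ 1`, splitting at a small level `δ`
(`x^r ≤ δ^r + x²/δ²` on `[0,1]`) upgrades this to every `Lʳ`. -/

open Finset Polynomial

section Binomial

variable {m : ℕ} {p : ℝ}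

theorem binExp_eq_sum_eval_bernsteinPolynomial (f : ℕ → ℝ) :
    binExp m p f = ∑ k ∈ range (m + 1), (bernsteinPolynomial ℝ m k).eval p * f k := by
  simp [binExp, bernsteinPolynomial]

theorem binExp_add (f g : ℕ → ℝ) :
    binExp m p (fun k => f k + g k) = binExp m p f + binExp m p g := by
  simp only [binExp, mul_add, sum_add_distrib]

theorem binExp_const_mul (a : ℝ) (f : ℕ → ℝ) :
    binExp m p (fun k => a * f k) = a * binExp m p f := by
  simp only [binExp, mul_sum]
  exact sum_congr rfl fun k _ => by ring

theorem binExp_const (c : ℝ) : binExp m p (fun _ => c) = c := by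
  have h := congrArg (eval p) (bernsteinPolynomial.sum ℝ m)
  rw [eval_finsetSum, eval_one] at h
  rw [binExp_eq_sum_eval_bernsteinPolynomial, ← sum_mul, h, one_mul]

theorem binExp_affine (a b : ℝ) (f : ℕ → ℝ) :
    binExp m p (fun k => a * f k + b) = a * binExp m p f + b := by
  rw [binExp_add, binExp_const_mul, binExp_const]

theorem binVar_affine (a b : ℝ) (f : ℕ → ℝ) :
    binVar m p (fun k => a * f k + b) = a ^ 2 * binVar m p f := by
  rw [binVar, binVar, binExp_affine, ← binExp_const_mul (a ^ 2)]
  congr 1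
  funext k
  ring

theorem binExp_sub_sq (f : ℕ → ℝ) (c : ℝ) :
    binExp m p (fun k => (f k - c) ^ 2) = binVar m p f + (binExp m p f - c) ^ 2 := by
  set μ := binExp m p f
  have hsplit : (fun k => (f k - c) ^ 2)
      = fun k => (f k - μ) ^ 2 + (2 * (μ - c) * f k + (c ^ 2 - μ ^ 2)) := by
    ext k; ring
  rw [hsplit, binExp_add, binExp_affine, binVar]
  ring

theorem binExp_natCast : binExp m p (fun k => (k : ℝ)) = m * p := by
  have h := congrArg (eval p) (bernsteinPolynomial.sum_smul ℝ m)
  simp only [nsmul_eq_mul, eval_finsetSum, eval_mul, eval_natCast, eval_X] at h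
  rw [binExp_eq_sum_eval_bernsteinPolynomial, ← h]
  exact sum_congr rfl fun k _ => mul_comm _ _

theorem binVar_natCast : binVar m p (fun k => (k : ℝ)) = m * p * (1 - p) := by
  have h := congrArg (eval p) (bernsteinPolynomial.variance ℝ m)
  simp only [nsmul_eq_mul, eval_finsetSum, eval_mul, eval_pow, eval_sub, eval_X, eval_one,
    eval_natCast] at h
  rw [binVar, binExp_natCast, binExp_eq_sum_eval_bernsteinPolynomial, ← h]
  exact sum_congr rfl fun k _ => by ring

theorem binExp_mono (hp0 : 0 ≤ p) (hp1 : p ≤ 1) {f g : ℕ → ℝ}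
    (h : ∀ k ≤ m, f k ≤ g k) : binExp m p f ≤ binExp m p g := by
  have hq : 0 ≤ 1 - p := sub_nonneg.2 hp1
  refine sum_le_sum fun k hk => mul_le_mul_of_nonneg_left (h k ?_) (by positivity)
  exact Nat.lt_succ_iff.1 (mem_range.1 hk)

theorem binExp_nonneg (hp0 : 0 ≤ p) (hp1 : p ≤ 1) {f : ℕ → ℝ} (h : ∀ k, 0 ≤ f k) :
    0 ≤ binExp m p f :=
  binExp_const (m := m) (p := p) 0 ▸ binExp_mono hp0 hp1 fun k _ => h k

end Binomial

theorem rpow_le_inv_sq_mul_sq_add_rpow {x δ r : ℝ} (hx0 : 0 ≤ x) (hx1 : x ≤ 1) (hδ : 0 < δ)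
    (hr : 0 < r) : x ^ r ≤ (δ ^ 2)⁻¹ * x ^ 2 + δ ^ r := by
  rcases le_or_gt x δ with hxδ | hδx
  · have : x ^ r ≤ δ ^ r := Real.rpow_le_rpow hx0 hxδ hr.le
    have : 0 ≤ (δ ^ 2)⁻¹ * x ^ 2 := by positivity
    linarith
  · have hx1r : x ^ r ≤ 1 := Real.rpow_le_one hx0 hx1 hr.le
    have hsq : 1 ≤ (δ ^ 2)⁻¹ * x ^ 2 := by
      rw [inv_mul_eq_div, one_le_div (by positivity)]
      exact pow_le_pow_left₀ hδ.le hδx.le 2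
    linarith [Real.rpow_nonneg hδ.le r]

theorem tendsto_binExp_abs_rpow {p : ℝ} (hp0 : 0 ≤ p) (hp1 : p ≤ 1) {m : ℕ → ℕ}
    {f : ℕ → ℕ → ℝ} (hf : ∀ n, ∀ k ≤ m n, |f n k| ≤ 1)
    (hf2 : Tendsto (fun n => binExp (m n) p (fun k => f n k ^ 2)) atTop (𝓝 0))
    {r : ℝ} (hr : 0 < r) :
    Tendsto (fun n => binExp (m n) p (fun k => |f n k| ^ r)) atTop (𝓝 0) := by
  have hnonneg n : 0 ≤ binExp (m n) p (fun k => |f n k| ^ r) :=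
    binExp_nonneg hp0 hp1 fun k => Real.rpow_nonneg (abs_nonneg _) r
  refine tendsto_order.2
    ⟨fun a ha => Eventually.of_forall fun n => ha.trans_le (hnonneg n), fun ε hε => ?_⟩
  set δ := (ε / 2) ^ r⁻¹
  have hδ : 0 < δ := Real.rpow_pos_of_pos (half_pos hε) _
  have hδr : δ ^ r = ε / 2 := Real.rpow_inv_rpow (half_pos hε).le hr.ne'
  filter_upwards [hf2.eventually (gt_mem_nhds (by positivity : 0 < δ ^ 2 * (ε / 2)))] with n hn
  calc binExp (m n) p (fun k => |f n k| ^ r)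
      ≤ binExp (m n) p (fun k => (δ ^ 2)⁻¹ * f n k ^ 2 + δ ^ r) :=
        binExp_mono hp0 hp1 fun k hk => sq_abs (f n k) ▸
          rpow_le_inv_sq_mul_sq_add_rpow (abs_nonneg _) (hf n k hk) hδ hr
    _ = (δ ^ 2)⁻¹ * binExp (m n) p (fun k => f n k ^ 2) + ε / 2 := by
        rw [binExp_affine, hδr]
    _ < ε / 2 + ε / 2 := by
        gcongr
        rwa [inv_mul_lt_iff₀ (by positivity)]
    _ = ε := add_halves ε

theorem tendsto_of_eq_comp_inv {u : ℕ → ℝ} {g : ℝ → ℝ} (hg : ContinuousAt g 0)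
    (hu : ∀ n : ℕ, 1 ≤ n → u n = g (n : ℝ)⁻¹) : Tendsto u atTop (𝓝 (g 0)) :=
  (hg.tendsto.comp tendsto_inv_atTop_nhds_zero_nat).congr'
    (eventually_atTop.2 ⟨1, fun n hn => (hu n hn).symm⟩)

section Spider

variable {n L : ℕ}

theorem sum_range_abs_spider_degree (hL3 : 3 ≤ L) (hLn : L ≤ n + 2) :
    ∑ i ∈ range (n + 3),
        |((n : ℝ) + 3) * (if i = 0 then (L : ℝ) else if i ≤ L then 1 else 2)
          - 2 * ((n : ℝ) + 2)|
      = 2 * ((n : ℝ) + 1) * L := by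
  have hL : (3 : ℝ) ≤ L := by exact_mod_cast hL3
  have hcentroid :
      |((n : ℝ) + 3) * L - 2 * ((n : ℝ) + 2)| = ((n : ℝ) + 3) * L - 2 * ((n : ℝ) + 2) :=
    abs_of_nonneg (by nlinarith)
  have hleaf : ∀ i ∈ range L,
      |((n : ℝ) + 3) * (if i + 1 = 0 then (L : ℝ) else if i + 1 ≤ L then 1 else 2)
        - 2 * ((n : ℝ) + 2)| = (n : ℝ) + 1 := fun i hi => by
    rw [if_neg i.succ_ne_zero, if_pos (Nat.succ_le_of_lt (mem_range.1 hi)), mul_one,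
      show ((n : ℝ) + 3) - 2 * ((n : ℝ) + 2) = -((n : ℝ) + 1) by ring, abs_neg,
      abs_of_pos (by positivity)]
  have hinternal : ∀ i ∈ Ico L (n + 2),
      |((n : ℝ) + 3) * (if i + 1 = 0 then (L : ℝ) else if i + 1 ≤ L then 1 else 2)
        - 2 * ((n : ℝ) + 2)| = 2 := fun i hi => by
    rw [if_neg i.succ_ne_zero, if_neg (not_le.2 (Nat.lt_succ_of_le (mem_Ico.1 hi).1)),
      show ((n : ℝ) + 3) * 2 - 2 * ((n : ℝ) + 2) = 2 by ring, abs_two]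
  rw [sum_range_succ', ← sum_range_add_sum_Ico _ hLn, sum_congr rfl hleaf,
    sum_congr rfl hinternal, if_pos rfl, hcentroid, sum_const, sum_const, card_range,
    Nat.card_Ico, nsmul_eq_mul, nsmul_eq_mul, Nat.cast_sub hLn]
  push_cast
  ring

theorem hoover_index_spider (hL3 : 3 ≤ L) (hLn : L ≤ n + 2) :
    (∑ i : Fin (n + 3),
        |((n : ℝ) + 3) * (if (i : ℕ) = 0 then (L : ℝ) else if (i : ℕ) ≤ L then 1 else 2)
          - 2 * ((n : ℝ) + 2)|) / (4 * ((n : ℝ) + 2) * ((n : ℝ) + 3))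
      = ((n : ℝ) + 1) * L / (2 * ((n : ℝ) + 3) * ((n : ℝ) + 2)) := by
  rw [Fin.sum_univ_eq_sum_range (fun i => |((n : ℝ) + 3) *
      (if i = 0 then (L : ℝ) else if i ≤ L then 1 else 2) - 2 * ((n : ℝ) + 2)|),
    sum_range_abs_spider_degree hL3 hLn]
  field_simp
  ring

end Spider

section Hoover

variable {n : ℕ} {p : ℝ}

theorem hooverF_eq_affine :
    hooverF n = fun k : ℕ => ((n : ℝ) + 1) / (2 * ((n : ℝ) + 3) * ((n : ℝ) + 2)) * (k : ℝ)
      + 3 * (((n : ℝ) + 1) / (2 * ((n : ℝ) + 3) * ((n : ℝ) + 2))) := by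
  ext k
  rw [hooverF]
  ring

theorem binExp_hooverF (hn : 1 ≤ n) : binExp (n - 1) p (hooverF n) =
    (p * (n : ℝ) ^ 2 + 3 * (n : ℝ) + 3 - p) / (2 * ((n : ℝ) + 3) * ((n : ℝ) + 2)) := by
  rw [hooverF_eq_affine, binExp_affine, binExp_natCast, Nat.cast_sub hn, Nat.cast_one]
  field_simp
  ring

theorem binVar_hooverF (hn : 1 ≤ n) : binVar (n - 1) p (hooverF n) =
    p * (1 - p) * ((n : ℝ) ^ 2 - 1) * ((n : ℝ) + 1)
      / (4 * ((n : ℝ) + 3) ^ 2 * ((n : ℝ) + 2) ^ 2) := by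
  rw [hooverF_eq_affine, binVar_affine, binVar_natCast, Nat.cast_sub hn, Nat.cast_one]
  field_simp
  ring

theorem abs_hooverF_sub_le_one (hp0 : 0 ≤ p) (hp1 : p ≤ 1) {k : ℕ} (hk : k ≤ n - 1) :
    |hooverF n k - p / 2| ≤ 1 := by
  have hk' : (k : ℝ) ≤ n := by exact_mod_cast hk.trans (n.sub_le 1)
  have h0 : 0 ≤ hooverF n k := by rw [hooverF]; positivity
  have h1 : hooverF n k ≤ 1 := by
    rw [hooverF, div_le_one (by positivity)]
    nlinarith
  rw [abs_le]
  constructor <;> linarith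

theorem tendsto_binExp_hooverF :
    Tendsto (fun n => binExp (n - 1) p (hooverF n)) atTop (𝓝 (p / 2)) := by
  set g : ℝ → ℝ := fun x => (p + 3 * x + (3 - p) * x ^ 2) / (2 * (1 + 3 * x) * (1 + 2 * x))
  have hg : ContinuousAt g 0 := ContinuousAt.div (by fun_prop) (by fun_prop) (by norm_num)
  have h := tendsto_of_eq_comp_inv (u := fun n => binExp (n - 1) p (hooverF n)) hg fun n hn => by
    have : (n : ℝ) ≠ 0 := by positivity
    simp only [g, binExp_hooverF hn]
    field_simp
    ring
  simpa [g] using h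

theorem tendsto_binVar_hooverF :
    Tendsto (fun n => binVar (n - 1) p (hooverF n)) atTop (𝓝 0) := by
  set g : ℝ → ℝ := fun x =>
    p * (1 - p) * x * (1 - x ^ 2) * (1 + x) / (4 * (1 + 3 * x) ^ 2 * (1 + 2 * x) ^ 2)
  have hg : ContinuousAt g 0 := ContinuousAt.div (by fun_prop) (by fun_prop) (by norm_num)
  have h := tendsto_of_eq_comp_inv (u := fun n => binVar (n - 1) p (hooverF n)) hg fun n hn => by
    have : (n : ℝ) ≠ 0 := by positivity
    simp only [g, binVar_hooverF hn]
    field_simp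
  simpa [g] using h

theorem tendsto_binExp_hooverF_sub_sq :
    Tendsto (fun n => binExp (n - 1) p (fun k => (hooverF n k - p / 2) ^ 2)) atTop (𝓝 0) := by
  simp_rw [binExp_sub_sq]
  have hbias := ((tendsto_binExp_hooverF (p := p)).sub_const (p / 2)).pow 2
  simpa using tendsto_binVar_hooverF.add hbias

end Hoover

/-- The Hoover index H_n = Σ|(n+3)deg_i - 2(n+2)|/(4(n+2)(n+3)) equals (n+1)L_n/(2(n+3)(n+2));
its mean is (pn²+3n+3-p)/(2(n+3)(n+2)); its variance is p(1-p)(n²-1)(n+1)/(4(n+3)²(n+2)²);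
and H_n → p/2 in L^r for every r > 0. -/
theorem stmt19 (p : ℝ) (hp0 : 0 < p) (hp1 : p < 1) :
    (∀ (n L : ℕ), 3 ≤ L → L ≤ n + 2 →
      (∑ i : Fin (n+3),
          |((n : ℝ)+3) *
              (if (i : ℕ) = 0 then (L : ℝ) else if (i : ℕ) ≤ L then 1 else 2)
            - 2*((n : ℝ)+2)|) / (4*((n : ℝ)+2)*((n : ℝ)+3))
        = ((n : ℝ)+1)*(L : ℝ) / (2*((n : ℝ)+3)*((n : ℝ)+2))) ∧
    (∀ n : ℕ, 1 ≤ n → binExp (n-1) p (hooverF n) =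
        (p*(n : ℝ)^2 + 3*(n : ℝ) + 3 - p) / (2*((n : ℝ)+3)*((n : ℝ)+2))) ∧
    (∀ n : ℕ, 1 ≤ n → binVar (n-1) p (hooverF n) =
        p*(1-p)*((n : ℝ)^2-1)*((n : ℝ)+1) / (4*((n : ℝ)+3)^2*((n : ℝ)+2)^2)) ∧
    (∀ r : ℝ, 0 < r → Filter.Tendsto (fun n : ℕ =>
      binExp (n-1) p (fun k => |hooverF n k - p/2| ^ r))
      Filter.atTop (𝓝 (0 : ℝ))) :=
  ⟨fun _ _ => hoover_index_spider, fun _ => binExp_hooverF, fun _ => binVar_hooverF,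
    fun _ hr => tendsto_binExp_abs_rpow (f := fun n k => hooverF n k - p / 2) hp0.le hp1.le
      (fun _ _ => abs_hooverF_sub_le_one hp0.le hp1.le) tendsto_binExp_hooverF_sub_sq hr⟩
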